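/- Let Λ, Γ be unital quantum channels on ℂ^d and let id denote the identity channel on d'×d' complex matrices (for any d' ≥ 1). Then d_av^ch(Λ ⊗ id, Γ ⊗ id) = d_av^ch(Λ, Γ), where Λ ⊗ id is the quantum channel on ℂ^{dd'} determined by (Λ ⊗ id)(A ⊗ B) = Λ(A) ⊗ B on Kronecker products. -/

import Mathlib

open Matrix Kronecker ComplexOrder

/-- The Hilbert–Schmidt (Frobenius) norm of a complex matrix. -/
noncomputable def hsNorm {n : Type*} [Fintype n] (A : Matrix n n ℂ) : ℝ :=
  Real.sqrt ((Matrix.trace (Aᴴ * A)).re)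

/-- The (normalized) Choi matrix `J_Λ = (1/d) ∑ᵢⱼ E_ij ⊗ Λ(E_ij)` of a linear map on matrices. -/
noncomputable def choi {n : Type*} [Fintype n] [DecidableEq n]
    (Λ : Matrix n n ℂ →ₗ[ℂ] Matrix n n ℂ) : Matrix (n × n) (n × n) ℂ :=
  ((Fintype.card n : ℂ))⁻¹ •
    ∑ i, ∑ j, (Matrix.single i j (1 : ℂ)) ⊗ₖ Λ (Matrix.single i j (1 : ℂ))

/-- A quantum channel: a completely positive (positive semidefinite Choi matrix)
trace-preserving linear map. -/
def IsChannel {n : Type*} [Fintype n] [DecidableEq n]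
    (Λ : Matrix n n ℂ →ₗ[ℂ] Matrix n n ℂ) : Prop :=
  (choi Λ).PosSemidef ∧ ∀ X, (Λ X).trace = X.trace

/-- The average-case distance between quantum channels,
`(1/2) √(‖J_Λ − J_Γ‖_HS² + ‖(Λ−Γ)(I/d)‖_HS²)`. -/
noncomputable def davCh {n : Type*} [Fintype n] [DecidableEq n]
    (Λ Γ : Matrix n n ℂ →ₗ[ℂ] Matrix n n ℂ) : ℝ :=
  (1 / 2) * Real.sqrt ((hsNorm (choi Λ - choi Γ)) ^ 2 +
    (hsNorm (Λ (((Fintype.card n : ℂ))⁻¹ • 1) - Γ (((Fintype.card n : ℂ))⁻¹ • 1))) ^ 2)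

/-! Unitality makes the term `(Λ - Γ)(I/d)` of `d_av` vanish for both pairs, so only the Choi
distance is left. Up to reordering the four tensor factors, `J_{Λ ⊗ id} = J_Λ ⊗ J_id`; the
Hilbert–Schmidt norm is invariant under this reordering and multiplicative under `⊗`, and
`‖J_id‖_HS = 1` because `J_id` is the projector onto the maximally entangled state. -/

lemma Matrix.submatrix_sub' {l m n o α : Type*} [Sub α] (A B : Matrix m n α) (r : l → m)
    (c : o → n) : (A - B).submatrix r c = A.submatrix r c - B.submatrix r c :=
  rfl

lemma Matrix.sub_kronecker {l m n p α : Type*} [NonUnitalNonAssocRing α] (A B : Matrix l m α)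
    (C : Matrix n p α) : (A - B) ⊗ₖ C = A ⊗ₖ C - B ⊗ₖ C := by
  ext
  exact sub_mul _ _ _

lemma hsNorm_eq_sqrt_sum_normSq {n : Type*} [Fintype n] (A : Matrix n n ℂ) :
    hsNorm A = √(∑ i, ∑ j, Complex.normSq (A i j)) := by
  rw [hsNorm, Finset.sum_comm]
  simp [trace, mul_apply, Complex.re_sum, ← Complex.normSq_eq_conj_mul_self]

lemma hsNorm_nonneg {n : Type*} [Fintype n] (A : Matrix n n ℂ) : 0 ≤ hsNorm A :=
  Real.sqrt_nonneg _

lemma hsNorm_submatrix_equiv {m n : Type*} [Fintype m] [Fintype n] (A : Matrix m m ℂ)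
    (e : n ≃ m) : hsNorm (A.submatrix e e) = hsNorm A := by
  simp only [hsNorm_eq_sqrt_sum_normSq, submatrix_apply]
  rw [← e.sum_comp (fun i => ∑ j, Complex.normSq (A i j))]
  simp only [fun i => e.sum_comp (fun j => Complex.normSq (A (e i) j))]

lemma hsNorm_kronecker {m n : Type*} [Fintype m] [Fintype n] (A : Matrix m m ℂ)
    (B : Matrix n n ℂ) : hsNorm (A ⊗ₖ B) = hsNorm A * hsNorm B := by
  simp only [hsNorm_eq_sqrt_sum_normSq, kronecker_apply, Complex.normSq_mul,
    Fintype.sum_prod_type]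
  rw [← Real.sqrt_mul (Finset.sum_nonneg fun i _ =>
    Finset.sum_nonneg fun j _ => Complex.normSq_nonneg (A i j)),
    Finset.sum_mul_sum]
  congr 1
  refine Finset.sum_congr rfl fun i _ => Finset.sum_congr rfl fun i' _ => ?_
  rw [Finset.sum_comm, Finset.sum_mul_sum]
  exact Finset.sum_comm

lemma choi_apply {n : Type*} [Fintype n] [DecidableEq n]
    (Λ : Matrix n n ℂ →ₗ[ℂ] Matrix n n ℂ) (i a j b : n) :
    choi Λ (i, a) (j, b) = (Fintype.card n : ℂ)⁻¹ * Λ (single i j 1) a b := by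
  simp only [choi, Matrix.smul_apply, Matrix.sum_apply, kronecker_apply, smul_eq_mul]
  congr 1
  rw [Finset.sum_eq_single i, Finset.sum_eq_single j]
  · simp
  · intro l _ hl; simp [Matrix.single, hl]
  · simp
  · intro k _ hk
    exact Finset.sum_eq_zero fun l _ => by simp [Matrix.single, hk]
  · simp

lemma hsNorm_choi_id {n : Type*} [Fintype n] [DecidableEq n] [Nonempty n] :
    hsNorm (choi (LinearMap.id : Matrix n n ℂ →ₗ[ℂ] Matrix n n ℂ)) = 1 := by
  simp only [hsNorm_eq_sqrt_sum_normSq, Fintype.sum_prod_type, choi_apply, LinearMap.id_apply,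
    single_apply, ite_and, mul_ite, mul_one, mul_zero, apply_ite Complex.normSq,
    Complex.normSq_zero, Finset.sum_ite_irrel, Finset.sum_ite_eq, Finset.mem_univ, if_true,
    Finset.sum_const_zero, Finset.sum_const, Finset.card_univ, nsmul_eq_mul, Complex.normSq_inv,
    Complex.normSq_natCast]
  have : (Fintype.card n : ℝ) ≠ 0 := by positivity
  field_simp
  exact Real.sqrt_one

lemma choi_of_kronecker {m n : Type*} [Fintype m] [DecidableEq m] [Fintype n] [DecidableEq n]
    (Λ : Matrix m m ℂ →ₗ[ℂ] Matrix m m ℂ)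
    (ΛI : Matrix (m × n) (m × n) ℂ →ₗ[ℂ] Matrix (m × n) (m × n) ℂ)
    (hΛI : ∀ A B, ΛI (A ⊗ₖ B) = Λ A ⊗ₖ B) :
    choi ΛI = (choi Λ ⊗ₖ choi (LinearMap.id : Matrix n n ℂ →ₗ[ℂ] Matrix n n ℂ)).submatrix
      (Equiv.prodProdProdComm m n m n) (Equiv.prodProdProdComm m n m n) := by
  ext ⟨⟨i, i'⟩, ⟨a, a'⟩⟩ ⟨⟨j, j'⟩, ⟨b, b'⟩⟩
  have hsingle : single (i, i') (j, j') (1 : ℂ) = single i j 1 ⊗ₖ single i' j' 1 := by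
    rw [single_kronecker_single, one_mul]
  simp only [submatrix_apply, Equiv.prodProdProdComm_apply, kronecker_apply, choi_apply, hsingle,
    hΛI, LinearMap.id_apply, Fintype.card_prod]
  push_cast
  ring

lemma hsNorm_choi_sub_of_kronecker {m n : Type*} [Fintype m] [DecidableEq m] [Fintype n]
    [DecidableEq n] [Nonempty n] (Λ Γ : Matrix m m ℂ →ₗ[ℂ] Matrix m m ℂ)
    (ΛI ΓI : Matrix (m × n) (m × n) ℂ →ₗ[ℂ] Matrix (m × n) (m × n) ℂ)
    (hΛI : ∀ A B, ΛI (A ⊗ₖ B) = Λ A ⊗ₖ B)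
    (hΓI : ∀ A B, ΓI (A ⊗ₖ B) = Γ A ⊗ₖ B) :
    hsNorm (choi ΛI - choi ΓI) = hsNorm (choi Λ - choi Γ) := by
  rw [choi_of_kronecker Λ ΛI hΛI, choi_of_kronecker Γ ΓI hΓI, ← submatrix_sub',
    ← sub_kronecker, hsNorm_submatrix_equiv, hsNorm_kronecker, hsNorm_choi_id, mul_one]

lemma davCh_eq_of_map_one {n : Type*} [Fintype n] [DecidableEq n]
    {Λ Γ : Matrix n n ℂ →ₗ[ℂ] Matrix n n ℂ} (hΛ : Λ 1 = 1) (hΓ : Γ 1 = 1) :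
    davCh Λ Γ = hsNorm (choi Λ - choi Γ) / 2 := by
  rw [davCh, map_smul, map_smul, hΛ, hΓ, sub_self,
    hsNorm_eq_sqrt_sum_normSq (0 : Matrix n n ℂ)]
  simp only [Matrix.zero_apply, Complex.normSq_zero, Finset.sum_const_zero, Real.sqrt_zero]
  rw [zero_pow two_ne_zero, add_zero, Real.sqrt_sq (hsNorm_nonneg _)]
  ring

theorem statement14_general (d d' : ℕ) (hd' : 1 ≤ d')
    (Λ Γ : Matrix (Fin d) (Fin d) ℂ →ₗ[ℂ] Matrix (Fin d) (Fin d) ℂ)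
    (hΛu : Λ 1 = 1) (hΓu : Γ 1 = 1)
    (ΛI ΓI : Matrix (Fin d × Fin d') (Fin d × Fin d') ℂ →ₗ[ℂ]
      Matrix (Fin d × Fin d') (Fin d × Fin d') ℂ)
    (hΛI : ∀ (A : Matrix (Fin d) (Fin d) ℂ) (B : Matrix (Fin d') (Fin d') ℂ),
      ΛI (A ⊗ₖ B) = Λ A ⊗ₖ B)
    (hΓI : ∀ (A : Matrix (Fin d) (Fin d) ℂ) (B : Matrix (Fin d') (Fin d') ℂ),
      ΓI (A ⊗ₖ B) = Γ A ⊗ₖ B) :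
    davCh ΛI ΓI = davCh Λ Γ := by
  have : Nonempty (Fin d') := ⟨⟨0, hd'⟩⟩
  have hΛIu : ΛI 1 = 1 := by rw [← one_kronecker_one, hΛI, hΛu]
  have hΓIu : ΓI 1 = 1 := by rw [← one_kronecker_one, hΓI, hΓu]
  rw [davCh_eq_of_map_one hΛIu hΓIu, davCh_eq_of_map_one hΛu hΓu,
    hsNorm_choi_sub_of_kronecker Λ Γ ΛI ΓI hΛI hΓI]

theorem statement14 (d d' : ℕ) (hd' : 1 ≤ d')
    (Λ Γ : Matrix (Fin d) (Fin d) ℂ →ₗ[ℂ] Matrix (Fin d) (Fin d) ℂ)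
    (hΛ : IsChannel Λ) (hΛu : Λ 1 = 1) (hΓ : IsChannel Γ) (hΓu : Γ 1 = 1)
    (ΛI ΓI : Matrix (Fin d × Fin d') (Fin d × Fin d') ℂ →ₗ[ℂ]
      Matrix (Fin d × Fin d') (Fin d × Fin d') ℂ)
    (hΛI : ∀ (A : Matrix (Fin d) (Fin d) ℂ) (B : Matrix (Fin d') (Fin d') ℂ),
      ΛI (A ⊗ₖ B) = Λ A ⊗ₖ B)
    (hΓI : ∀ (A : Matrix (Fin d) (Fin d) ℂ) (B : Matrix (Fin d') (Fin d') ℂ),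
      ΓI (A ⊗ₖ B) = Γ A ⊗ₖ B) :
    davCh ΛI ΓI = davCh Λ Γ :=
  statement14_general d d' hd' Λ Γ hΛu hΓu ΛI ΓI hΛI hΓI
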